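/- Let A be an n×n Hermitian matrix with smallest eigenvalue λ₁ whose eigenspace is W₁, with spectral gap γ > 0. Let U ∈ C^{n×k} be a matrix with orthonormal columns, and let μ ∈ R and R = A U - μ U. Then ||P^{W₁^⊥} U|| ≤ (1/γ)(|μ - λ₁| + ||R||), where ||·|| is the spectral norm and P^{W₁^⊥} is the orthogonal projector onto the orthogonal complement of W₁. -/

import Mathlib

/-!
In the orthonormal eigenbasis of `A`, the map `A - λ₁` scales every coordinate that lies outside
`W₁` by at least `γ` in absolute value and kills the others, so `γ ‖P^{W₁^⊥} v‖ ≤ ‖(A - λ₁) v‖`.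
For `v = U x` the triangle inequality gives `‖(A - λ₁) U x‖ ≤ ‖R x‖ + |μ - λ₁| ‖x‖`, and `U` is an
isometry.
-/

open scoped Matrix

/-- The orthogonal projector onto a subspace `W`,
viewed as a continuous linear map on the ambient space. -/
noncomputable def projCLM {n : ℕ} (W : Submodule ℂ (EuclideanSpace ℂ (Fin n))) :
    EuclideanSpace ℂ (Fin n) →L[ℂ] EuclideanSpace ℂ (Fin n) :=
  W.subtypeL.comp (W.orthogonalProjectionOnto)

open scoped InnerProductSpace

theorem Matrix.norm_toEuclideanLin_apply_of_conjTranspose_mul_self_eq_one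
    {𝕜 : Type*} [RCLike 𝕜] {m n : Type*} [Fintype m] [Fintype n] [DecidableEq m] [DecidableEq n]
    {U : Matrix m n 𝕜} (hU : Uᴴ * U = 1) (x : EuclideanSpace 𝕜 n) :
    ‖U.toEuclideanLin x‖ = ‖x‖ := by
  refine (LinearMap.norm_map_iff_inner_map_map U.toEuclideanLin).2 (fun x y => ?_) x
  rw [← LinearMap.adjoint_inner_right, ← Matrix.toEuclideanLin_conjTranspose_eq_adjoint,
    ← LinearMap.comp_apply, ← Matrix.toLpLin_mul_same, hU, Matrix.toLpLin_one, LinearMap.id_apply]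

section SpectralGap

variable {𝕜 E ι : Type*} [RCLike 𝕜] [NormedAddCommGroup E] [InnerProductSpace 𝕜 E]
  [Fintype ι] {T : E →ₗ[𝕜] E} {lam : ι → ℝ} {w : OrthonormalBasis ι 𝕜 E}

theorem LinearMap.IsSymmetric.inner_eigenbasis_apply (hT : T.IsSymmetric)
    (heig : ∀ i, T (w i) = (lam i : 𝕜) • w i) (i : ι) (v : E) :
    ⟪w i, T v⟫_𝕜 = lam i * ⟪w i, v⟫_𝕜 := by
  rw [← hT, heig, inner_smul_left, RCLike.conj_ofReal]

theorem LinearMap.IsSymmetric.mul_norm_le_of_mem_orthogonal_eigenspace (hT : T.IsSymmetric)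
    (heig : ∀ i, T (w i) = (lam i : 𝕜) • w i) {c γ : ℝ} (hγ : 0 ≤ γ)
    (hgap : ∀ i, lam i ≠ c → γ ≤ |lam i - c|) {y : E}
    (hy : y ∈ (Module.End.eigenspace T (c : 𝕜))ᗮ) :
    γ * ‖y‖ ≤ ‖T y - (c : 𝕜) • y‖ := by
  have hcoef (i : ι) : ‖⟪w i, T y - (c : 𝕜) • y⟫_𝕜‖ = |lam i - c| * ‖⟪w i, y⟫_𝕜‖ := by
    rw [inner_sub_right, inner_smul_right, hT.inner_eigenbasis_apply heig, ← sub_mul,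
      norm_mul, ← RCLike.ofReal_sub, RCLike.norm_ofReal]
  have hterm (i : ι) : γ * ‖⟪w i, y⟫_𝕜‖ ≤ |lam i - c| * ‖⟪w i, y⟫_𝕜‖ := by
    by_cases hi : lam i = c
    · have hwi : w i ∈ Module.End.eigenspace T (c : 𝕜) := by
        rw [Module.End.mem_eigenspace_iff, heig, hi]
      simp [Submodule.inner_right_of_mem_orthogonal hwi hy]
    · exact mul_le_mul_of_nonneg_right (hgap i hi) (norm_nonneg _)
  refine (pow_le_pow_iff_left₀ (by positivity) (norm_nonneg _) two_ne_zero).1 ?_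
  calc (γ * ‖y‖) ^ 2 = ∑ i, (γ * ‖⟪w i, y⟫_𝕜‖) ^ 2 := by
        simp_rw [mul_pow, ← Finset.mul_sum, w.sum_sq_norm_inner_right]
    _ ≤ ∑ i, ‖⟪w i, T y - (c : 𝕜) • y⟫_𝕜‖ ^ 2 := by
        gcongr with i
        rw [hcoef]
        exact hterm i
    _ = ‖T y - (c : 𝕜) • y‖ ^ 2 := w.sum_sq_norm_inner_right _

theorem LinearMap.IsSymmetric.mul_norm_starProjection_orthogonal_eigenspace_le
    [FiniteDimensional 𝕜 E] (hT : T.IsSymmetric)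
    (heig : ∀ i, T (w i) = (lam i : 𝕜) • w i) {c γ : ℝ} (hγ : 0 ≤ γ)
    (hgap : ∀ i, lam i ≠ c → γ ≤ |lam i - c|) (v : E) :
    γ * ‖(Module.End.eigenspace T (c : 𝕜))ᗮ.starProjection v‖ ≤ ‖T v - (c : 𝕜) • v‖ := by
  set K := Module.End.eigenspace T (c : 𝕜)
  have hp : T (K.starProjection v) = (c : 𝕜) • K.starProjection v :=
    Module.End.mem_eigenspace_iff.1 (K.starProjection_apply_mem v)
  have hsame : T (Kᗮ.starProjection v) - (c : 𝕜) • Kᗮ.starProjection v = T v - (c : 𝕜) • v := by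
    rw [Submodule.starProjection_orthogonal_val, map_sub, hp, smul_sub]
    abel
  rw [← hsame]
  exact hT.mul_norm_le_of_mem_orthogonal_eigenspace heig hγ hgap (Kᗮ.starProjection_apply_mem v)

end SpectralGap

theorem stmt9_general {n k : ℕ} (hn : 0 < n) (A : Matrix (Fin n) (Fin n) ℂ)
    (hA : A.IsHermitian)
    (lam : Fin n → ℝ) (hmono : Monotone lam)
    (w : OrthonormalBasis (Fin n) ℂ (EuclideanSpace ℂ (Fin n)))
    (heig : ∀ i, Matrix.toEuclideanLin A (w i) = (lam i : ℂ) • w i)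
    (m : ℕ) (hm : m < n)
    (hmul : ∀ i : Fin n, (i : ℕ) < m → lam i = lam ⟨0, hn⟩)
    (hgap : lam ⟨0, hn⟩ < lam ⟨m, hm⟩)
    (U : Matrix (Fin n) (Fin k) ℂ) (hU : Uᴴ * U = 1) (μ : ℝ) :
    ‖(projCLM (Module.End.eigenspace
        (Matrix.toEuclideanLin A : Module.End ℂ (EuclideanSpace ℂ (Fin n)))
        ((lam ⟨0, hn⟩ : ℝ) : ℂ))ᗮ).comp
        (LinearMap.toContinuousLinearMap (Matrix.toEuclideanLin U))‖ ≤
      (1 / (lam ⟨m, hm⟩ - lam ⟨0, hn⟩)) *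
        (|μ - lam ⟨0, hn⟩| +
          ‖LinearMap.toContinuousLinearMap
            (Matrix.toEuclideanLin (A * U - (μ : ℂ) • U))‖) := by
  set R := LinearMap.toContinuousLinearMap (Matrix.toEuclideanLin (A * U - (μ : ℂ) • U))
  set lam₁ := lam ⟨0, hn⟩
  have hγ : 0 < lam ⟨m, hm⟩ - lam₁ := sub_pos.2 hgap
  have hsep (i : Fin n) (hi : lam i ≠ lam₁) : lam ⟨m, hm⟩ - lam₁ ≤ |lam i - lam₁| := by
    have hmi : lam ⟨m, hm⟩ ≤ lam i := hmono (Fin.le_def.2 (not_lt.1 (mt (hmul i) hi)))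
    rw [abs_of_nonneg (by linarith)]
    linarith
  refine ContinuousLinearMap.opNorm_le_bound _ (by positivity) fun x => ?_
  set u := Matrix.toEuclideanLin U x
  have hRx : R x = A.toEuclideanLin u - (μ : ℂ) • u := by
    change Matrix.toEuclideanLin (A * U - (μ : ℂ) • U) x = _
    rw [map_sub, map_smul, Matrix.toLpLin_mul_same]
    rfl
  have hproj := (Matrix.isSymmetric_toEuclideanLin_iff.2 hA)
    |>.mul_norm_starProjection_orthogonal_eigenspace_le heig hγ.le hsep u
  calc ‖projCLM _ u‖
      ≤ ‖A.toEuclideanLin u - (lam₁ : ℂ) • u‖ / (lam ⟨m, hm⟩ - lam₁) := by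
        rw [le_div_iff₀ hγ, mul_comm]
        exact hproj
    _ ≤ (‖R x‖ + |μ - lam₁| * ‖x‖) / (lam ⟨m, hm⟩ - lam₁) := by
        gcongr
        rw [hRx, ← Matrix.norm_toEuclideanLin_apply_of_conjTranspose_mul_self_eq_one hU x,
          ← Real.norm_eq_abs, ← Complex.norm_real, ← norm_smul]
        refine (norm_add_le _ _).trans_eq' ?_
        push_cast
        congr 1
        module
    _ ≤ (‖R‖ * ‖x‖ + |μ - lam₁| * ‖x‖) / (lam ⟨m, hm⟩ - lam₁) := by
        gcongr
        exact R.le_opNorm x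
    _ = 1 / (lam ⟨m, hm⟩ - lam₁) * (|μ - lam₁| + ‖R‖) * ‖x‖ := by ring

/-- Let `A` be Hermitian with eigenvalues `lam 0 ≤ ⋯ ≤ lam (n-1)` (orthonormal
eigenbasis `w`), smallest eigenvalue `lam 0` with eigenspace `W₁` of dimension
`m`, and spectral gap `γ = lam m - lam 0 > 0`.  For a matrix `U` with
orthonormal columns, `μ ∈ ℝ` and residual `R = A U - μ U`, one has
`‖P^{W₁^⊥} U‖ ≤ (|μ - lam 0| + ‖R‖)/γ` in the spectral norm. -/
theorem stmt9 {n k : ℕ} (hn : 0 < n) (A : Matrix (Fin n) (Fin n) ℂ)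
    (hA : A.IsHermitian)
    (lam : Fin n → ℝ) (hmono : Monotone lam)
    (w : OrthonormalBasis (Fin n) ℂ (EuclideanSpace ℂ (Fin n)))
    (heig : ∀ i, Matrix.toEuclideanLin A (w i) = (lam i : ℂ) • w i)
    (m : ℕ) (hm : m < n) (hm0 : 0 < m)
    (hmul : ∀ i : Fin n, (i : ℕ) < m → lam i = lam ⟨0, hn⟩)
    (hgap : lam ⟨0, hn⟩ < lam ⟨m, hm⟩)
    (U : Matrix (Fin n) (Fin k) ℂ) (hU : Uᴴ * U = 1) (μ : ℝ) :
    ‖(projCLM (Module.End.eigenspace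
        (Matrix.toEuclideanLin A : Module.End ℂ (EuclideanSpace ℂ (Fin n)))
        ((lam ⟨0, hn⟩ : ℝ) : ℂ))ᗮ).comp
        (LinearMap.toContinuousLinearMap (Matrix.toEuclideanLin U))‖ ≤
      (1 / (lam ⟨m, hm⟩ - lam ⟨0, hn⟩)) *
        (|μ - lam ⟨0, hn⟩| +
          ‖LinearMap.toContinuousLinearMap
            (Matrix.toEuclideanLin (A * U - (μ : ℂ) • U))‖) :=
  stmt9_general hn A hA lam hmono w heig m hm hmul hgap U hU μ
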